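/- Let 𝒫 be a converting vector set from ρ to σ, let {μ_i}_{i∈[q]} and {ν_i}_{i∈[q]} be unit vectors in ℂ^q satisfying ⟨μ_i|ν_j⟩ = (q/(2(q−1)))·(1 − δ_{ij}) for all i, j ∈ [q], let x ∈ X, and let α, ε̂ > 0. Define |φ_x⟩ := |t_{x+}⟩ + (√ε̂·(q−1)/(√α·q))·Σ_{j∈[n]} |j⟩|ν_{x_j}⟩|v_{xj}⟩. Then: (i) ⟨ψ_{y,α,ε̂}|φ_x⟩ = 0 for every y ∈ X, hence Λ^{α,ε̂}|φ_x⟩ = |φ_x⟩; (ii) Π_x|φ_x⟩ = |φ_x⟩; consequently U(𝒫, x, α, ε̂)|φ_x⟩ = |φ_x⟩; and (iii) ‖|φ_x⟩‖² = 1 + (ε̂(q−1)²/(α q²))·w_−(𝒫, x). -/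

import Mathlib

noncomputable section

open Finset

variable {q n m : ℕ} {𝓗 : Type*} [NormedAddCommGroup 𝓗] [InnerProductSpace ℂ 𝓗]

/-- `(u, v)` is a converting vector set from `ρ` to `σ` (relative to `X`):
for all `x, y ∈ X`, `⟨ρ_x|ρ_y⟩ − ⟨σ_x|σ_y⟩ = Σ_{j : x_j ≠ y_j} ⟨u_{xj}|v_{yj}⟩`. -/
def IsCVS (X : Finset (Fin n → Fin q)) (ρ σ : (Fin n → Fin q) → 𝓗)
    (u v : (Fin n → Fin q) → Fin n → EuclideanSpace ℂ (Fin m)) : Prop :=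
  ∀ x ∈ X, ∀ y ∈ X,
    (inner ℂ (ρ x) (ρ y) : ℂ) - (inner ℂ (σ x) (σ y) : ℂ) =
      ∑ j ∈ Finset.univ.filter (fun j => x j ≠ y j), (inner ℂ (u x j) (v y j) : ℂ)

/-- witness size of a family of vectors: `Σ_j ‖u_{xj}‖²`. -/
def wSize (u : (Fin n → Fin q) → Fin n → EuclideanSpace ℂ (Fin m))
    (x : Fin n → Fin q) : ℝ :=
  ∑ j : Fin n, ‖u x j‖ ^ 2

/-- The space `(ℂ²⊗𝒣) ⊕ (ℂⁿ⊗ℂ^q⊗ℂ^m)`, realized as the `L²` direct sum of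
`𝒣 ⊕ 𝒣` (the two components of `ℂ²⊗𝒣`) and `n` copies of `ℂ^{q×m}`. -/
abbrev BigSpace (𝓗 : Type*) [NormedAddCommGroup 𝓗] [InnerProductSpace ℂ 𝓗]
    (q n m : ℕ) : Type _ :=
  WithLp 2 ((PiLp 2 fun _ : Fin 2 => 𝓗) ×
    (PiLp 2 fun _ : Fin n => EuclideanSpace ℂ (Fin q × Fin m)))

/-- build an element of `BigSpace` from its two components. -/
def mkBig (a : PiLp 2 fun _ : Fin 2 => 𝓗)
    (g : PiLp 2 fun _ : Fin n => EuclideanSpace ℂ (Fin q × Fin m)) :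
    BigSpace 𝓗 q n m :=
  (WithLp.equiv 2 _).symm (a, g)

/-- `|0⟩a + |1⟩b ∈ ℂ²⊗𝒣`. -/
def mk2 (a b : 𝓗) : PiLp 2 fun _ : Fin 2 => 𝓗 :=
  (WithLp.equiv 2 _).symm (fun i => if i = 0 then a else b)

/-- build an element of `ℂⁿ⊗ℂ^q⊗ℂ^m` from its components. -/
def mkPi (g : Fin n → EuclideanSpace ℂ (Fin q × Fin m)) :
    PiLp 2 fun _ : Fin n => EuclideanSpace ℂ (Fin q × Fin m) :=
  (WithLp.equiv 2 _).symm g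

/-- the pure tensor `ν ⊗ w ∈ ℂ^q ⊗ ℂ^m`. -/
def tens (ν : EuclideanSpace ℂ (Fin q)) (w : EuclideanSpace ℂ (Fin m)) :
    EuclideanSpace ℂ (Fin q × Fin m) :=
  (WithLp.equiv 2 _).symm fun p => ν p.1 * w p.2

/-- `|t_{x+}⟩ = (1/√2)(|0⟩|ρ_x⟩ + |1⟩|σ_x⟩)`. -/
def tPlus (ρ σ : (Fin n → Fin q) → 𝓗) (x : Fin n → Fin q) :
    BigSpace 𝓗 q n m :=
  mkBig (mk2 ((((Real.sqrt 2 : ℝ) : ℂ))⁻¹ • ρ x) ((((Real.sqrt 2 : ℝ) : ℂ))⁻¹ • σ x)) 0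

/-- `|t_{x−}⟩ = (1/√2)(|0⟩|ρ_x⟩ − |1⟩|σ_x⟩)`. -/
def tMinus (ρ σ : (Fin n → Fin q) → 𝓗) (x : Fin n → Fin q) :
    BigSpace 𝓗 q n m :=
  mkBig (mk2 ((((Real.sqrt 2 : ℝ) : ℂ))⁻¹ • ρ x) (-((((Real.sqrt 2 : ℝ) : ℂ))⁻¹ • σ x))) 0

/-- `|ψ_{x,α,ε̂}⟩ = √(ε̂/α)|t_{x−}⟩ − Σ_j |j⟩|μ_{x_j}⟩|u_{xj}⟩`. -/
def psi (ρ σ : (Fin n → Fin q) → 𝓗)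
    (u : (Fin n → Fin q) → Fin n → EuclideanSpace ℂ (Fin m))
    (μ : Fin q → EuclideanSpace ℂ (Fin q)) (α εh : ℝ) (x : Fin n → Fin q) :
    BigSpace 𝓗 q n m :=
  (((Real.sqrt (εh / α) : ℝ) : ℂ)) • tMinus ρ σ x -
    mkBig 0 (mkPi fun j => tens (μ (x j)) (u x j))

/-- `⟨ν| ⊗ I : ℂ^q ⊗ ℂ^m → ℂ^m`, contraction of the first tensor factor with `ν`. -/
def contractL (ν : EuclideanSpace ℂ (Fin q)) :
    EuclideanSpace ℂ (Fin q × Fin m) →ₗ[ℂ] EuclideanSpace ℂ (Fin m) :=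
  (WithLp.linearEquiv 2 ℂ (Fin m → ℂ)).symm.toLinearMap ∘ₗ
    LinearMap.pi fun k => (innerSL ℂ (tens ν (EuclideanSpace.single k 1))).toLinearMap

/-- `|ν⟩ ⊗ I : ℂ^m → ℂ^q ⊗ ℂ^m`, tensoring with `ν`. -/
def tensL (ν : EuclideanSpace ℂ (Fin q)) :
    EuclideanSpace ℂ (Fin m) →ₗ[ℂ] EuclideanSpace ℂ (Fin q × Fin m) :=
  (WithLp.linearEquiv 2 ℂ (Fin q × Fin m → ℂ)).symm.toLinearMap ∘ₗ
    LinearMap.pi fun p : Fin q × Fin m =>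
      ν p.1 • (LinearMap.proj p.2 ∘ₗ (WithLp.linearEquiv 2 ℂ (Fin m → ℂ)).toLinearMap)

/-- `|ν⟩⟨ν| ⊗ I` on `ℂ^q ⊗ ℂ^m`. -/
def projMu (ν : EuclideanSpace ℂ (Fin q)) :
    EuclideanSpace ℂ (Fin q × Fin m) →ₗ[ℂ] EuclideanSpace ℂ (Fin q × Fin m) :=
  tensL ν ∘ₗ contractL ν

/-- `Σ_j |j⟩⟨j| ⊗ |μ_{x_j}⟩⟨μ_{x_j}| ⊗ I` on `ℂⁿ⊗ℂ^q⊗ℂ^m`. -/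
def sumProjMu (μ : Fin q → EuclideanSpace ℂ (Fin q)) (x : Fin n → Fin q) :
    (PiLp 2 fun _ : Fin n => EuclideanSpace ℂ (Fin q × Fin m)) →ₗ[ℂ]
      (PiLp 2 fun _ : Fin n => EuclideanSpace ℂ (Fin q × Fin m)) :=
  (WithLp.linearEquiv 2 ℂ (∀ _ : Fin n, EuclideanSpace ℂ (Fin q × Fin m))).symm.toLinearMap ∘ₗ
    (LinearMap.pi fun j => projMu (μ (x j)) ∘ₗ LinearMap.proj j) ∘ₗ
    (WithLp.linearEquiv 2 ℂ (∀ _ : Fin n, EuclideanSpace ℂ (Fin q × Fin m))).toLinearMap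

/-- the canonical linear identification of `BigSpace` with the product. -/
def bigEquiv (𝓗 : Type*) [NormedAddCommGroup 𝓗] [InnerProductSpace ℂ 𝓗] (q n m : ℕ) :
    BigSpace 𝓗 q n m ≃ₗ[ℂ]
      (PiLp 2 fun _ : Fin 2 => 𝓗) ×
        (PiLp 2 fun _ : Fin n => EuclideanSpace ℂ (Fin q × Fin m)) :=
  WithLp.linearEquiv 2 ℂ _

/-- `Π_x = I − Σ_j |j⟩⟨j| ⊗ |μ_{x_j}⟩⟨μ_{x_j}| ⊗ I` on `(ℂ²⊗𝒣) ⊕ (ℂⁿ⊗ℂ^q⊗ℂ^m)`. -/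
def PiX (μ : Fin q → EuclideanSpace ℂ (Fin q)) (x : Fin n → Fin q) :
    BigSpace 𝓗 q n m →ₗ[ℂ] BigSpace 𝓗 q n m :=
  LinearMap.id -
    (bigEquiv 𝓗 q n m).symm.toLinearMap ∘ₗ
      (LinearMap.prodMap 0 (sumProjMu μ x)) ∘ₗ (bigEquiv 𝓗 q n m).toLinearMap

/-- orthogonal projection onto a submodule, as an endomorphism. -/
def projL {K : Type*} [NormedAddCommGroup K] [InnerProductSpace ℂ K] [FiniteDimensional ℂ K]
    (S : Submodule ℂ K) : K →ₗ[ℂ] K :=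
  S.subtype ∘ₗ (S.orthogonalProjection).toLinearMap

/-- `Λ^{α,ε̂}`: the orthogonal projection onto the orthogonal complement of
`span{|ψ_{x,α,ε̂}⟩ : x ∈ X}`. -/
def LambdaCVS [FiniteDimensional ℂ 𝓗] (X : Finset (Fin n → Fin q))
    (ρ σ : (Fin n → Fin q) → 𝓗)
    (u : (Fin n → Fin q) → Fin n → EuclideanSpace ℂ (Fin m))
    (μ : Fin q → EuclideanSpace ℂ (Fin q)) (α εh : ℝ) :
    BigSpace 𝓗 q n m →ₗ[ℂ] BigSpace 𝓗 q n m :=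
  projL ((Submodule.span ℂ ((fun x => psi ρ σ u μ α εh x) '' (X : Set (Fin n → Fin q))))ᗮ)

/-- `U(𝒫, x, α, ε̂) = (2Π_x − I)(2Λ^{α,ε̂} − I)`. -/
def Ucvs [FiniteDimensional ℂ 𝓗] (X : Finset (Fin n → Fin q))
    (ρ σ : (Fin n → Fin q) → 𝓗)
    (u : (Fin n → Fin q) → Fin n → EuclideanSpace ℂ (Fin m))
    (μ : Fin q → EuclideanSpace ℂ (Fin q)) (α εh : ℝ) (x : Fin n → Fin q) :
    BigSpace 𝓗 q n m →ₗ[ℂ] BigSpace 𝓗 q n m :=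
  (2 • PiX μ x - LinearMap.id) ∘ₗ (2 • LambdaCVS X ρ σ u μ α εh - LinearMap.id)

/-- `phaseSpace U Θ` is the span of the eigenvectors of `U` with eigenvalue `e^{iθ}`
for `|θ| ≤ Θ`; the orthogonal projection onto it is `P_Θ(U)`. -/
def phaseSpace {K : Type*} [NormedAddCommGroup K] [InnerProductSpace ℂ K]
    (U : K →ₗ[ℂ] K) (Θ : ℝ) : Submodule ℂ K :=
  ⨆ θ : Set.Icc (-Θ) Θ, Module.End.eigenspace U (Complex.exp (Complex.I * (θ : ℝ)))

/-!
Every inner product with `|φ_x⟩` splits along `(ℂ²⊗𝒣) ⊕ (ℂⁿ⊗ℂ^q⊗ℂ^m)`. Against `|ψ_y⟩`, the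
first summand contributes `√(ε̂/α)·(⟨ρ_y|ρ_x⟩ − ⟨σ_y|σ_x⟩)/2`, and the second contributes
`Σ_j ⟨μ_{y_j}|ν_{x_j}⟩⟨u_{yj}|v_{xj}⟩`, which by the shape of `⟨μ_i|ν_j⟩` is `q/(2(q−1))` times
the converting-vector-set sum `Σ_{j : x_j ≠ y_j}`, so the two cancel for the chosen coefficient.
Since `ν_{x_j} ⊥ μ_{x_j}`, `Π_x` fixes `|φ_x⟩`, and then so does the product of the two
reflections `U`. The norm is Pythagoras across the two summands.
-/

open scoped InnerProductSpace

lemma inner_tens (a c : EuclideanSpace ℂ (Fin q)) (b d : EuclideanSpace ℂ (Fin m)) :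
    ⟪tens a b, tens c d⟫_ℂ = ⟪a, c⟫_ℂ * ⟪b, d⟫_ℂ := by
  simp only [tens, PiLp.inner_apply, RCLike.inner_apply, WithLp.equiv_symm_apply, map_mul,
    Fintype.sum_prod_type, Finset.sum_mul_sum]
  exact Finset.sum_congr rfl fun i _ => Finset.sum_congr rfl fun k _ => by ring

lemma norm_tens (a : EuclideanSpace ℂ (Fin q)) (b : EuclideanSpace ℂ (Fin m)) :
    ‖tens a b‖ = ‖a‖ * ‖b‖ := by
  have h := congrArg Complex.re (inner_tens a a b b)
  simp only [inner_self_eq_norm_sq_to_K] at h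
  norm_cast at h
  rw [← mul_pow] at h
  exact (pow_left_inj₀ (norm_nonneg _) (by positivity) two_ne_zero).mp h

lemma inner_mkBig (a a' : PiLp 2 fun _ : Fin 2 => 𝓗)
    (g g' : PiLp 2 fun _ : Fin n => EuclideanSpace ℂ (Fin q × Fin m)) :
    ⟪mkBig a g, mkBig a' g'⟫_ℂ = ⟪a, a'⟫_ℂ + ⟪g, g'⟫_ℂ :=
  rfl

lemma inner_mk2 (a b a' b' : 𝓗) : ⟪mk2 a b, mk2 a' b'⟫_ℂ = ⟪a, a'⟫_ℂ + ⟪b, b'⟫_ℂ := by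
  simp [mk2, PiLp.inner_apply, Fin.sum_univ_two]

lemma inner_mkPi (g g' : Fin n → EuclideanSpace ℂ (Fin q × Fin m)) :
    ⟪mkPi g, mkPi g'⟫_ℂ = ∑ j, ⟪g j, g' j⟫_ℂ :=
  rfl

lemma norm_sq_mkBig (a : PiLp 2 fun _ : Fin 2 => 𝓗)
    (g : PiLp 2 fun _ : Fin n => EuclideanSpace ℂ (Fin q × Fin m)) :
    ‖mkBig a g‖ ^ 2 = ‖a‖ ^ 2 + ‖g‖ ^ 2 :=
  WithLp.prod_norm_sq_eq_of_L2 _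

lemma norm_sq_mkPi (g : Fin n → EuclideanSpace ℂ (Fin q × Fin m)) :
    ‖mkPi g‖ ^ 2 = ∑ j, ‖g j‖ ^ 2 :=
  PiLp.norm_sq_eq_of_L2 _ _

lemma inv_sqrt_two_mul_self : ((√2 : ℝ) : ℂ)⁻¹ * ((√2 : ℝ) : ℂ)⁻¹ = 2⁻¹ := by
  rw [← mul_inv, ← Complex.ofReal_mul, Real.mul_self_sqrt zero_le_two]
  norm_num

lemma inner_tMinus_tPlus (ρ σ : (Fin n → Fin q) → 𝓗) (x y : Fin n → Fin q) :
    ⟪(tMinus ρ σ y : BigSpace 𝓗 q n m), tPlus ρ σ x⟫_ℂ =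
      2⁻¹ * (⟪ρ y, ρ x⟫_ℂ - ⟪σ y, σ x⟫_ℂ) := by
  simp only [tMinus, tPlus, inner_mkBig, inner_mk2, inner_zero_left, add_zero, inner_neg_left,
    inner_smul_left, inner_smul_right, map_inv₀, Complex.conj_ofReal]
  linear_combination (⟪ρ y, ρ x⟫_ℂ - ⟪σ y, σ x⟫_ℂ) * inv_sqrt_two_mul_self

lemma norm_sq_tPlus (ρ σ : (Fin n → Fin q) → 𝓗) (x : Fin n → Fin q) :
    ‖(tPlus ρ σ x : BigSpace 𝓗 q n m)‖ ^ 2 = (‖ρ x‖ ^ 2 + ‖σ x‖ ^ 2) / 2 := by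
  simp only [tPlus, mk2, Fin.isValue, WithLp.equiv_symm_apply, norm_sq_mkBig,
    PiLp.norm_sq_eq_of_L2, Fin.sum_univ_two, ↓reduceIte, one_ne_zero, norm_smul, norm_inv,
    Complex.norm_real, Real.norm_eq_abs, mul_pow, inv_pow, sq_abs, Real.sq_sqrt zero_le_two,
    norm_zero, zero_pow two_ne_zero, add_zero]
  ring

lemma sum_inner_tens_eq_of_isCVS {X : Finset (Fin n → Fin q)} {ρ σ : (Fin n → Fin q) → 𝓗}
    {u v : (Fin n → Fin q) → Fin n → EuclideanSpace ℂ (Fin m)} (hP : IsCVS X ρ σ u v)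
    {μ ν : Fin q → EuclideanSpace ℂ (Fin q)} {κ : ℂ}
    (hμν : ∀ i j, ⟪μ i, ν j⟫_ℂ = κ * if i = j then 0 else 1)
    {x y : Fin n → Fin q} (hx : x ∈ X) (hy : y ∈ X) :
    ∑ j, ⟪tens (μ (y j)) (u y j), tens (ν (x j)) (v x j)⟫_ℂ =
      κ * (⟪ρ y, ρ x⟫_ℂ - ⟪σ y, σ x⟫_ℂ) := by
  rw [hP y hy x hx, Finset.sum_filter, Finset.mul_sum]
  refine Finset.sum_congr rfl fun j _ => ?_
  rw [inner_tens, hμν]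
  split_ifs <;> simp_all

lemma inner_psi_tPlus_add_smul (ρ σ : (Fin n → Fin q) → 𝓗)
    (u : (Fin n → Fin q) → Fin n → EuclideanSpace ℂ (Fin m))
    (μ : Fin q → EuclideanSpace ℂ (Fin q)) (α εh c : ℝ) (x y : Fin n → Fin q)
    (g : Fin n → EuclideanSpace ℂ (Fin q × Fin m)) :
    ⟪psi ρ σ u μ α εh y, tPlus ρ σ x + (c : ℂ) • mkBig 0 (mkPi g)⟫_ℂ =
      (√(εh / α) : ℂ) * 2⁻¹ * (⟪ρ y, ρ x⟫_ℂ - ⟪σ y, σ x⟫_ℂ) -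
        c * ∑ j, ⟪tens (μ (y j)) (u y j), g j⟫_ℂ := by
  rw [psi, inner_sub_left, inner_add_right, inner_add_right, inner_smul_left, inner_smul_left,
    inner_smul_right, inner_smul_right, inner_tMinus_tPlus]
  simp only [tMinus, tPlus, inner_mkBig, inner_mkPi, inner_zero_left, inner_zero_right,
    Complex.conj_ofReal]
  ring

lemma inner_psi_phi_eq_zero {X : Finset (Fin n → Fin q)} {ρ σ : (Fin n → Fin q) → 𝓗}
    {u v : (Fin n → Fin q) → Fin n → EuclideanSpace ℂ (Fin m)} (hP : IsCVS X ρ σ u v)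
    {μ ν : Fin q → EuclideanSpace ℂ (Fin q)}
    (hμν : ∀ i j, ⟪μ i, ν j⟫_ℂ = ((q : ℂ) / (2 * ((q : ℂ) - 1))) * if i = j then 0 else 1)
    (hq : 2 ≤ q) {α : ℝ} (hα : 0 ≤ α) (εh : ℝ) {x y : Fin n → Fin q} (hx : x ∈ X)
    (hy : y ∈ X) :
    ⟪psi ρ σ u μ α εh y, tPlus ρ σ x +
      ((√εh * ((q : ℝ) - 1) / (√α * q) : ℝ) : ℂ) •
        mkBig 0 (mkPi fun j => tens (ν (x j)) (v x j))⟫_ℂ = 0 := by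
  have hscale : (√(εh / α) : ℂ) * 2⁻¹ =
      ((√εh * ((q : ℝ) - 1) / (√α * q) : ℝ) : ℂ) * (q / (2 * ((q : ℂ) - 1))) := by
    have hq0 : (q : ℂ) ≠ 0 := by exact_mod_cast (by omega : q ≠ 0)
    have hq1 : (q : ℂ) - 1 ≠ 0 := sub_ne_zero.mpr (by exact_mod_cast (by omega : q ≠ 1))
    rw [Real.sqrt_div' εh hα]
    push_cast
    field_simp
  rw [inner_psi_tPlus_add_smul, sum_inner_tens_eq_of_isCVS hP hμν hx hy]
  linear_combination (⟪ρ y, ρ x⟫_ℂ - ⟪σ y, σ x⟫_ℂ) * hscale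

lemma LambdaCVS_apply_eq_self [FiniteDimensional ℂ 𝓗] (X : Finset (Fin n → Fin q))
    (ρ σ : (Fin n → Fin q) → 𝓗) (u : (Fin n → Fin q) → Fin n → EuclideanSpace ℂ (Fin m))
    (μ : Fin q → EuclideanSpace ℂ (Fin q)) (α εh : ℝ) {φ : BigSpace 𝓗 q n m}
    (h : ∀ y ∈ X, ⟪psi ρ σ u μ α εh y, φ⟫_ℂ = 0) : LambdaCVS X ρ σ u μ α εh φ = φ := by
  have hortho : Submodule.span ℂ (psi ρ σ u μ α εh '' X) ⟂ Submodule.span ℂ {φ} :=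
    Submodule.isOrtho_span.mpr (by rintro _ ⟨y, hy, rfl⟩ _ rfl; exact h y hy)
  exact Submodule.starProjection_eq_self_iff.mpr
    (hortho.symm (Submodule.mem_span_singleton_self φ))

lemma projMu_tens_of_inner_eq_zero {μ ν : EuclideanSpace ℂ (Fin q)} (h : ⟪μ, ν⟫_ℂ = 0)
    (w : EuclideanSpace ℂ (Fin m)) : projMu μ (tens ν w) = 0 := by
  have hcontract : contractL μ (tens ν w) = 0 := by
    ext k
    simp [contractL, inner_tens, h]
  rw [projMu, LinearMap.comp_apply, hcontract, map_zero]

lemma sumProjMu_mkPi_tens {μ : Fin q → EuclideanSpace ℂ (Fin q)} {x : Fin n → Fin q}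
    {ν : Fin n → EuclideanSpace ℂ (Fin q)} (h : ∀ j, ⟪μ (x j), ν j⟫_ℂ = 0)
    (w : Fin n → EuclideanSpace ℂ (Fin m)) :
    sumProjMu μ x (mkPi fun j => tens (ν j) (w j)) = 0 := by
  change mkPi (fun j => projMu (μ (x j)) (tens (ν j) (w j))) = mkPi 0
  simp only [projMu_tens_of_inner_eq_zero (h _)]
  rfl

lemma mkBig_zero : mkBig (0 : PiLp 2 fun _ : Fin 2 => 𝓗)
    (0 : PiLp 2 fun _ : Fin n => EuclideanSpace ℂ (Fin q × Fin m)) = 0 :=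
  rfl

lemma PiX_mkBig (μ : Fin q → EuclideanSpace ℂ (Fin q)) (x : Fin n → Fin q)
    (a : PiLp 2 fun _ : Fin 2 => 𝓗)
    (g : PiLp 2 fun _ : Fin n => EuclideanSpace ℂ (Fin q × Fin m)) :
    PiX μ x (mkBig a g) = mkBig a g - mkBig 0 (sumProjMu μ x g) :=
  rfl

lemma PiX_tPlus_add_smul (ρ σ : (Fin n → Fin q) → 𝓗) {μ : Fin q → EuclideanSpace ℂ (Fin q)}
    {x : Fin n → Fin q} {ν : Fin n → EuclideanSpace ℂ (Fin q)}
    (h : ∀ j, ⟪μ (x j), ν j⟫_ℂ = 0) (c : ℂ) (w : Fin n → EuclideanSpace ℂ (Fin m)) :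
    PiX μ x (tPlus ρ σ x + c • mkBig 0 (mkPi fun j => tens (ν j) (w j))) =
      tPlus ρ σ x + c • mkBig 0 (mkPi fun j => tens (ν j) (w j)) := by
  rw [map_add, map_smul, tPlus, PiX_mkBig, PiX_mkBig, map_zero, sumProjMu_mkPi_tens h,
    mkBig_zero, sub_zero, sub_zero]

lemma reflection_comp_reflection_apply_eq_self {R M : Type*} [Semiring R] [AddCommGroup M]
    [Module R M] {P L : M →ₗ[R] M} {v : M} (hP : P v = v) (hL : L v = v) :
    ((2 • P - LinearMap.id) ∘ₗ (2 • L - LinearMap.id)) v = v := by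
  simp only [LinearMap.comp_apply, LinearMap.sub_apply, two_smul, LinearMap.add_apply,
    LinearMap.id_apply, hL, hP, add_sub_cancel_right]

lemma norm_sq_tPlus_add_smul (ρ σ : (Fin n → Fin q) → 𝓗) (x : Fin n → Fin q) (c : ℝ)
    (g : Fin n → EuclideanSpace ℂ (Fin q × Fin m)) :
    ‖tPlus ρ σ x + (c : ℂ) • mkBig 0 (mkPi g)‖ ^ 2 =
      (‖ρ x‖ ^ 2 + ‖σ x‖ ^ 2) / 2 + c ^ 2 * ∑ j, ‖g j‖ ^ 2 := by
  have hperp : ⟪tPlus ρ σ x, (c : ℂ) • mkBig 0 (mkPi g)⟫_ℂ = 0 := by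
    rw [inner_smul_right, tPlus, inner_mkBig, inner_zero_left, inner_zero_right, add_zero,
      mul_zero]
  rw [sq, norm_add_sq_eq_norm_sq_add_norm_sq_of_inner_eq_zero _ _ hperp, ← sq, ← sq,
    norm_sq_tPlus, norm_smul, mul_pow, norm_sq_mkBig, norm_sq_mkPi, Complex.norm_real,
    Real.norm_eq_abs, sq_abs, norm_zero]
  ring

theorem phi_fixed_vector_general (hq : 2 ≤ q) [FiniteDimensional ℂ 𝓗]
    (X : Finset (Fin n → Fin q)) (ρ σ : (Fin n → Fin q) → 𝓗)
    (hρ : ∀ x ∈ X, ‖ρ x‖ = 1) (hσ : ∀ x ∈ X, ‖σ x‖ = 1)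
    (u v : (Fin n → Fin q) → Fin n → EuclideanSpace ℂ (Fin m))
    (hP : IsCVS X ρ σ u v)
    (μ : Fin q → EuclideanSpace ℂ (Fin q))
    (x : Fin n → Fin q) (hx : x ∈ X)
    (α εh : ℝ) (hα : 0 < α) (hε : 0 < εh)
    (ν : Fin q → EuclideanSpace ℂ (Fin q)) (hν : ∀ i, ‖ν i‖ = 1)
    (hμν : ∀ i j, (inner ℂ (μ i) (ν j) : ℂ) =
      ((q : ℂ) / (2 * ((q : ℂ) - 1))) * (if i = j then 0 else 1))
    (φ : BigSpace 𝓗 q n m)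
    (hφ : φ = tPlus ρ σ x +
      (((Real.sqrt εh * ((q : ℝ) - 1) / (Real.sqrt α * (q : ℝ)) : ℝ) : ℂ)) •
        mkBig 0 (mkPi fun j => tens (ν (x j)) (v x j))) :
    (∀ y ∈ X, (inner ℂ (psi ρ σ u μ α εh y) φ : ℂ) = 0) ∧
      LambdaCVS X ρ σ u μ α εh φ = φ ∧
      PiX μ x φ = φ ∧
      Ucvs X ρ σ u μ α εh x φ = φ ∧
      ‖φ‖ ^ 2 = 1 + (εh * ((q : ℝ) - 1) ^ 2 / (α * (q : ℝ) ^ 2)) * wSize v x := by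
  have horth : ∀ y ∈ X, ⟪psi ρ σ u μ α εh y, φ⟫_ℂ = 0 := fun y hy =>
    hφ ▸ inner_psi_phi_eq_zero hP hμν hq hα.le εh hx hy
  have hLam : LambdaCVS X ρ σ u μ α εh φ = φ := LambdaCVS_apply_eq_self X ρ σ u μ α εh horth
  have hPi : PiX μ x φ = φ := by
    rw [hφ]
    exact PiX_tPlus_add_smul ρ σ (fun j => by simp [hμν]) _ _
  refine ⟨horth, hLam, hPi, reflection_comp_reflection_apply_eq_self hPi hLam, ?_⟩
  rw [hφ, norm_sq_tPlus_add_smul, hρ x hx, hσ x hx, wSize, div_pow, mul_pow, mul_pow,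
    Real.sq_sqrt hε.le, Real.sq_sqrt hα.le]
  simp only [norm_tens, hν, one_mul]
  ring

/-- `|φ_x⟩ = |t_{x+}⟩ + (√ε̂(q−1)/(√α q))·Σ_j |j⟩|ν_{x_j}⟩|v_{xj}⟩` is
orthogonal to every `|ψ_{y,α,ε̂}⟩`, is fixed by `Λ^{α,ε̂}`, `Π_x` and `U(𝒫,x,α,ε̂)`,
and has `‖φ_x‖² = 1 + (ε̂(q−1)²/(αq²))·w_−(𝒫,x)`. -/
theorem phi_fixed_vector (hq : 2 ≤ q) (hn : 1 ≤ n) (hm : 1 ≤ m) [FiniteDimensional ℂ 𝓗]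
    (X : Finset (Fin n → Fin q)) (ρ σ : (Fin n → Fin q) → 𝓗)
    (hρ : ∀ x ∈ X, ‖ρ x‖ = 1) (hσ : ∀ x ∈ X, ‖σ x‖ = 1)
    (u v : (Fin n → Fin q) → Fin n → EuclideanSpace ℂ (Fin m))
    (hP : IsCVS X ρ σ u v)
    (μ : Fin q → EuclideanSpace ℂ (Fin q)) (hμ : ∀ i, ‖μ i‖ = 1)
    (x : Fin n → Fin q) (hx : x ∈ X)
    (α εh : ℝ) (hα : 0 < α) (hε : 0 < εh)
    (ν : Fin q → EuclideanSpace ℂ (Fin q)) (hν : ∀ i, ‖ν i‖ = 1)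
    (hμν : ∀ i j, (inner ℂ (μ i) (ν j) : ℂ) =
      ((q : ℂ) / (2 * ((q : ℂ) - 1))) * (if i = j then 0 else 1))
    (φ : BigSpace 𝓗 q n m)
    (hφ : φ = tPlus ρ σ x +
      (((Real.sqrt εh * ((q : ℝ) - 1) / (Real.sqrt α * (q : ℝ)) : ℝ) : ℂ)) •
        mkBig 0 (mkPi fun j => tens (ν (x j)) (v x j))) :
    (∀ y ∈ X, (inner ℂ (psi ρ σ u μ α εh y) φ : ℂ) = 0) ∧
      LambdaCVS X ρ σ u μ α εh φ = φ ∧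
      PiX μ x φ = φ ∧
      Ucvs X ρ σ u μ α εh x φ = φ ∧
      ‖φ‖ ^ 2 = 1 + (εh * ((q : ℝ) - 1) ^ 2 / (α * (q : ℝ) ^ 2)) * wSize v x :=
  phi_fixed_vector_general hq X ρ σ hρ hσ u v hP μ x hx α εh hα hε ν hν hμν φ hφ
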